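/- Let E/F be a ramified quadratic extension of nonarchimedean local fields with residue cardinality q. For every n ≥ 1, the index [𝔬_E^× : 𝔬_F^× · 𝔲_E^{2n−1}] equals q^{n−1}. -/

import Mathlib

/-!
Let `U_i = 1 + 𝔪_B ^ i` and `K_i = Aˣ U_i`. For `i ≥ 1`, `u = 1 + ϖ ^ i y ↦ y mod ϖ` identifies
`U_i / U_{i+1}` with the residue field of `B`, which has `q` elements because it equals that of `A`.
Since `𝔪_B ^ (2k) = 𝔪_A ^ k B`, every element of `U_{2k}` is congruent modulo `𝔪_B ^ (2k+1)` to a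
unit of `A`, so `K_{2k} = K_{2k+1}`. Since elements of `A` have even valuation in `B`,
`Aˣ ∩ U_{2k+1} ⊆ U_{2k+2}`, so `K_{2k+1} / K_{2k+2} ≅ U_{2k+1} / U_{2k+2}` has order `q`.
Hence `[Bˣ : K_{2n-1}] = q ^ (n-1)`.
-/

open IsLocalRing

namespace IsLocalRing

section Filtration

variable {B : Type*} [CommRing B] [IsLocalRing B]

theorem isUnit_of_sub_mem_maximalIdeal {x y : B} (hy : IsUnit y)
    (h : x - y ∈ maximalIdeal B) : IsUnit x := by
  by_contra hx
  have hy' : y = x - (x - y) := by ring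
  exact (mem_maximalIdeal y).mp (hy' ▸ sub_mem ((mem_maximalIdeal x).mpr hx) h) hy

variable (B) in
def unitsFiltration (i : ℕ) : Subgroup Bˣ :=
  (Units.map (Ideal.Quotient.mk (maximalIdeal B ^ i) : B →* B ⧸ maximalIdeal B ^ i)).ker

theorem mem_unitsFiltration {i : ℕ} {u : Bˣ} :
    u ∈ unitsFiltration B i ↔ (u : B) - 1 ∈ maximalIdeal B ^ i := by
  rw [unitsFiltration, MonoidHom.mem_ker, Units.ext_iff, Units.coe_map, Units.val_one,
    MonoidHom.coe_coe, ← map_one (Ideal.Quotient.mk _), Ideal.Quotient.eq]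

theorem unitsFiltration_zero : unitsFiltration B 0 = ⊤ := by
  ext u
  simp [mem_unitsFiltration]

theorem unitsFiltration_antitone : Antitone (unitsFiltration B) := fun _ _ h _ hu =>
  mem_unitsFiltration.mpr (Ideal.pow_le_pow_right h (mem_unitsFiltration.mp hu))

theorem mem_sup_unitsFiltration_of_sub_mem {H : Subgroup Bˣ} {g x : Bˣ} (hg : g ∈ H) {i : ℕ}
    (h : (x : B) - g ∈ maximalIdeal B ^ i) : x ∈ H ⊔ unitsFiltration B i := by
  have hgx : g⁻¹ * x ∈ unitsFiltration B i := by
    rw [mem_unitsFiltration, show ((g⁻¹ * x : Bˣ) : B) - 1 = (g⁻¹ : Bˣ) * ((x : B) - g) by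
      rw [Units.val_mul, mul_sub, Units.inv_mul]]
    exact Ideal.mul_mem_left _ _ h
  simpa using Subgroup.mul_mem_sup hg hgx

end Filtration

section DiscreteValuationRing

variable {B : Type*} [CommRing B] [IsDomain B] [IsDiscreteValuationRing B] {ϖ : B}
  (hϖ : Irreducible ϖ) {m : ℕ}
include hϖ

theorem mem_unitsFiltration_iff_dvd {u : Bˣ} :
    u ∈ unitsFiltration B m ↔ ϖ ^ m ∣ (u : B) - 1 := by
  rw [mem_unitsFiltration, hϖ.maximalIdeal_eq, Ideal.span_singleton_pow, Ideal.mem_span_singleton]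

theorem mem_unitsFiltration_succ_iff {u : Bˣ} {y : B} (hy : (u : B) - 1 = ϖ ^ m * y) :
    u ∈ unitsFiltration B (m + 1) ↔ y ∈ maximalIdeal B := by
  rw [mem_unitsFiltration_iff_dvd hϖ, hy, pow_succ,
    mul_dvd_mul_iff_left (pow_ne_zero m hϖ.ne_zero), hϖ.maximalIdeal_eq, Ideal.mem_span_singleton]

noncomputable def unitsFiltrationCoeff (u : unitsFiltration B m) : B :=
  ((mem_unitsFiltration_iff_dvd hϖ).mp u.2).choose

theorem sub_one_eq_pow_mul_unitsFiltrationCoeff (u : unitsFiltration B m) :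
    ((u : Bˣ) : B) - 1 = ϖ ^ m * unitsFiltrationCoeff hϖ u :=
  ((mem_unitsFiltration_iff_dvd hϖ).mp u.2).choose_spec

theorem unitsFiltrationCoeff_eq {u : unitsFiltration B m} {y : B}
    (hy : ((u : Bˣ) : B) - 1 = ϖ ^ m * y) : unitsFiltrationCoeff hϖ u = y :=
  mul_left_cancel₀ (pow_ne_zero m hϖ.ne_zero)
    (by rw [← sub_one_eq_pow_mul_unitsFiltrationCoeff, hy])

/-- `1 + ϖ ^ m * y ↦ y mod ϖ`; it is multiplicative because for `m ≥ 1` the cross term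
`ϖ ^ (2 * m) * y * y'` vanishes modulo `ϖ ^ (m + 1)`. -/
noncomputable def unitsFiltrationToResidueField (hm : 1 ≤ m) :
    unitsFiltration B m →* Multiplicative (ResidueField B) where
  toFun u := .ofAdd (residue B (unitsFiltrationCoeff hϖ u))
  map_one' := by simp [unitsFiltrationCoeff_eq hϖ (u := 1) (y := 0) (by simp)]
  map_mul' u v := by
    set y := unitsFiltrationCoeff hϖ u
    set y' := unitsFiltrationCoeff hϖ v
    have hu := sub_one_eq_pow_mul_unitsFiltrationCoeff hϖ u
    have hv := sub_one_eq_pow_mul_unitsFiltrationCoeff hϖ v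
    have huv : unitsFiltrationCoeff hϖ (u * v) = ϖ ^ m * (y * y') + y + y' :=
      unitsFiltrationCoeff_eq hϖ (by
        push_cast; linear_combination ((v : Bˣ) : B) * hu + hv + ϖ ^ m * y * hv)
    have hcross : residue B (ϖ ^ m * (y * y')) = 0 :=
      (residue_eq_zero_iff _).mpr (Ideal.mul_mem_right _ _
        (Ideal.pow_mem_of_mem _ ((mem_maximalIdeal ϖ).mpr hϖ.not_isUnit) m hm))
    simp only [huv, map_add, hcross, zero_add]
    rfl

theorem unitsFiltrationToResidueField_surjective (hm : 1 ≤ m) :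
    Function.Surjective (unitsFiltrationToResidueField hϖ hm) := by
  intro z
  obtain ⟨b, hb⟩ := residue_surjective z.toAdd
  have hϖm : ϖ ^ m * b ∈ maximalIdeal B := Ideal.mul_mem_right _ _
    (Ideal.pow_mem_of_mem _ ((mem_maximalIdeal ϖ).mpr hϖ.not_isUnit) m hm)
  have hx : IsUnit (1 + ϖ ^ m * b) :=
    isUnit_of_sub_mem_maximalIdeal isUnit_one (by rwa [add_sub_cancel_left])
  have hx_sub : ((hx.unit : Bˣ) : B) - 1 = ϖ ^ m * b := by rw [hx.unit_spec, add_sub_cancel_left]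
  refine ⟨⟨hx.unit, (mem_unitsFiltration_iff_dvd hϖ).mpr ⟨b, hx_sub⟩⟩, ?_⟩
  change Multiplicative.ofAdd (residue B _) = z
  rw [unitsFiltrationCoeff_eq hϖ hx_sub, hb, ofAdd_toAdd]

theorem ker_unitsFiltrationToResidueField (hm : 1 ≤ m) :
    (unitsFiltrationToResidueField hϖ hm).ker =
      (unitsFiltration B (m + 1)).subgroupOf (unitsFiltration B m) := by
  ext u
  rw [MonoidHom.mem_ker, Subgroup.mem_subgroupOf,
    mem_unitsFiltration_succ_iff hϖ (sub_one_eq_pow_mul_unitsFiltrationCoeff hϖ u),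
    ← residue_eq_zero_iff]
  rfl

end DiscreteValuationRing

section GradedPieces

variable {B : Type*} [CommRing B] [IsDomain B] [IsDiscreteValuationRing B] {m : ℕ}

theorem relIndex_unitsFiltration_succ (hm : 1 ≤ m) :
    (unitsFiltration B (m + 1)).relIndex (unitsFiltration B m) = Nat.card (ResidueField B) := by
  obtain ⟨ϖ, hϖ⟩ := IsDiscreteValuationRing.exists_irreducible B
  rw [Subgroup.relIndex, ← ker_unitsFiltrationToResidueField hϖ hm, Subgroup.index_ker,
    MonoidHom.range_eq_top.mpr (unitsFiltrationToResidueField_surjective hϖ hm),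
    Nat.card_congr Subgroup.topEquiv.toEquiv]
  rfl

theorem relIndex_sup_unitsFiltration_succ {H : Subgroup Bˣ} (hm : 1 ≤ m)
    (hH : H ⊓ unitsFiltration B m ≤ unitsFiltration B (m + 1)) :
    (H ⊔ unitsFiltration B (m + 1)).relIndex (H ⊔ unitsFiltration B m) =
      Nat.card (ResidueField B) := by
  have hsucc : unitsFiltration B (m + 1) ≤ unitsFiltration B m :=
    unitsFiltration_antitone m.le_succ
  have hinf :
      (H ⊔ unitsFiltration B (m + 1)) ⊓ unitsFiltration B m = unitsFiltration B (m + 1) := by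
    rw [sup_comm, sup_inf_assoc_of_le H hsucc, sup_eq_left.mpr hH]
  have hsup :
      H ⊔ unitsFiltration B m = (H ⊔ unitsFiltration B (m + 1)) ⊔ unitsFiltration B m := by
    rw [sup_assoc, sup_eq_right.mpr hsucc]
  rw [hsup, Subgroup.relIndex_sup_left, ← Subgroup.inf_relIndex_right, hinf,
    relIndex_unitsFiltration_succ hm]

end GradedPieces

section Extension

theorem nat_card_residueField_eq {A B : Type*} [CommRing A] [IsLocalRing A] [CommRing B]
    [IsLocalRing B] [Algebra A B] [IsLocalHom (algebraMap A B)]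
    (hres : Function.Surjective fun a : A => residue B (algebraMap A B a)) :
    Nat.card (ResidueField A) = Nat.card (ResidueField B) :=
  Nat.card_congr (Equiv.ofBijective (ResidueField.map (algebraMap A B))
    ⟨(ResidueField.map _).injective, fun z => by
      obtain ⟨a, ha⟩ := hres z
      exact ⟨residue A a, (ResidueField.map_residue _ a).trans ha⟩⟩)

variable {A B : Type*} [CommRing A] [IsDomain A] [IsDiscreteValuationRing A] [CommRing B]
  [IsLocalRing B] [Algebra A B] {e : ℕ}
  (hram : (maximalIdeal A).map (algebraMap A B) = maximalIdeal B ^ e)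
include hram

theorem maximalIdeal_pow_mul_eq_span {ϖ : A} (hϖ : Irreducible ϖ) (k : ℕ) :
    maximalIdeal B ^ (e * k) = Ideal.span {algebraMap A B (ϖ ^ k)} := by
  rw [pow_mul, ← hram, ← Ideal.map_pow, hϖ.maximalIdeal_eq, Ideal.span_singleton_pow,
    Ideal.map_span, Set.image_singleton]

theorem range_sup_unitsFiltration_mul_succ [IsLocalHom (algebraMap A B)]
    (hres : Function.Surjective fun a : A => residue B (algebraMap A B a)) (k : ℕ) :
    (Units.map (algebraMap A B).toMonoidHom).range ⊔ unitsFiltration B (e * k + 1) =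
      (Units.map (algebraMap A B).toMonoidHom).range ⊔ unitsFiltration B (e * k) := by
  refine le_antisymm (sup_le_sup_left (unitsFiltration_antitone (e * k).le_succ) _)
    (sup_le le_sup_left fun x hx => ?_)
  obtain ⟨ϖ, hϖ⟩ := IsDiscreteValuationRing.exists_irreducible A
  rw [mem_unitsFiltration, maximalIdeal_pow_mul_eq_span hram hϖ, Ideal.mem_span_singleton'] at hx
  obtain ⟨y, hy⟩ := hx
  obtain ⟨c, hc⟩ : ∃ c, residue B (algebraMap A B c) = residue B y := hres _
  have hsub : (x : B) - algebraMap A B (1 + ϖ ^ k * c) ∈ maximalIdeal B ^ (e * k + 1) := by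
    rw [show (x : B) - algebraMap A B (1 + ϖ ^ k * c) =
        (y - algebraMap A B c) * algebraMap A B (ϖ ^ k) by
      rw [map_add, map_one, map_mul]; linear_combination -hy,
      pow_succ', maximalIdeal_pow_mul_eq_span hram hϖ]
    exact Ideal.mul_mem_mul ((residue_eq_zero_iff _).mp (by rw [map_sub, hc, sub_self]))
      (Ideal.mem_span_singleton_self _)
  have ha : IsUnit (1 + ϖ ^ k * c) := (isUnit_map_iff (algebraMap A B) _).mp
    (isUnit_of_sub_mem_maximalIdeal x.isUnit (by
      simpa using neg_mem (Ideal.pow_le_self (Nat.succ_ne_zero _) hsub)))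
  exact mem_sup_unitsFiltration_of_sub_mem (MonoidHom.mem_range.mpr ⟨ha.unit, rfl⟩) hsub

end Extension

section RamifiedExtension

variable {A B : Type*} [CommRing A] [IsDomain A] [IsDiscreteValuationRing A] [CommRing B]
  [IsDomain B] [IsDiscreteValuationRing B] [Algebra A B] {e : ℕ}
  (hram : (maximalIdeal A).map (algebraMap A B) = maximalIdeal B ^ e)
include hram

theorem algebraMap_mem_maximalIdeal_pow_mul_succ {a : A}
    {k : ℕ} (ha : algebraMap A B a ∈ maximalIdeal B ^ (e * k + 1)) :
    algebraMap A B a ∈ maximalIdeal B ^ (e * (k + 1)) := by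
  rcases eq_or_ne a 0 with rfl | ha0
  · simp
  obtain ⟨ϖ, hϖ⟩ := IsDiscreteValuationRing.exists_irreducible A
  obtain ⟨j, u, rfl⟩ := IsDiscreteValuationRing.eq_unit_mul_pow_irreducible ha0 hϖ
  have hspan : Ideal.span {algebraMap A B (u * ϖ ^ j)} = maximalIdeal B ^ (e * j) := by
    rw [map_mul, Ideal.span_singleton_mul_left_unit ((u.isUnit).map _),
      maximalIdeal_pow_mul_eq_span hram hϖ]
  have hle : e * k + 1 ≤ e * j := by
    rw [← (Ideal.pow_right_strictAnti _ (IsDiscreteValuationRing.not_a_field B)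
      (maximalIdeal.isMaximal B).ne_top).le_iff_ge, ← hspan, Ideal.span_singleton_le_iff_mem]
    exact ha
  have hkj : k + 1 ≤ j := Nat.lt_of_mul_lt_mul_left hle
  exact Ideal.pow_le_pow_right (Nat.mul_le_mul_left e hkj)
    (hspan ▸ Ideal.mem_span_singleton_self _)

theorem range_inf_unitsFiltration_le (k : ℕ) :
    (Units.map (algebraMap A B).toMonoidHom).range ⊓ unitsFiltration B (e * k + 1) ≤
      unitsFiltration B (e * (k + 1)) := by
  intro x hx
  obtain ⟨⟨a, rfl⟩, hx⟩ := Subgroup.mem_inf.mp hx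
  simp only [mem_unitsFiltration, Units.coe_map, RingHom.toMonoidHom_eq_coe, MonoidHom.coe_coe,
    ← map_one (algebraMap A B), ← map_sub] at hx ⊢
  exact algebraMap_mem_maximalIdeal_pow_mul_succ hram hx

end RamifiedExtension

theorem index_range_sup_unitsFiltration_two_mul_add_one {A B : Type*} [CommRing A]
    [IsDomain A] [IsDiscreteValuationRing A] [CommRing B] [IsDomain B] [IsDiscreteValuationRing B]
    [Algebra A B] [IsLocalHom (algebraMap A B)]
    (hram : (maximalIdeal A).map (algebraMap A B) = maximalIdeal B ^ 2)
    (hres : Function.Surjective fun a : A => residue B (algebraMap A B a)) (j : ℕ) :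
    ((Units.map (algebraMap A B).toMonoidHom).range ⊔ unitsFiltration B (2 * j + 1)).index =
      Nat.card (ResidueField B) ^ j := by
  induction j with
  | zero =>
    rw [range_sup_unitsFiltration_mul_succ hram hres 0, mul_zero, unitsFiltration_zero,
      sup_top_eq, Subgroup.index_top, pow_zero]
  | succ j ih =>
    rw [range_sup_unitsFiltration_mul_succ hram hres, show 2 * (j + 1) = 2 * j + 1 + 1 by ring,
      ← Subgroup.relIndex_mul_index
        (sup_le_sup_left (unitsFiltration_antitone (2 * j + 1).le_succ) _),
      relIndex_sup_unitsFiltration_succ (by omega) (range_inf_unitsFiltration_le hram j), ih,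
      pow_succ, mul_comm]

end IsLocalRing

theorem stmt11_general {A B : Type*} [CommRing A] [CommRing B] [IsDomain A] [IsDomain B]
    [IsDiscreteValuationRing A] [IsDiscreteValuationRing B] [Algebra A B]
    (hram : Ideal.map (algebraMap A B) (IsLocalRing.maximalIdeal A) =
      IsLocalRing.maximalIdeal B ^ 2)
    (hressurj : Function.Surjective fun a : A =>
      Ideal.Quotient.mk (IsLocalRing.maximalIdeal B) (algebraMap A B a))
    (q : ℕ) (hq : Nat.card (IsLocalRing.ResidueField A) = q)
    (n : ℕ) :
    (Subgroup.closure
        (Set.range (Units.map (algebraMap A B : A →+* B).toMonoidHom) ∪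
          {u : Bˣ | (u : B) - 1 ∈ IsLocalRing.maximalIdeal B ^ (2 * n - 1)})).index =
      q ^ (n - 1) := by
  have : IsLocalHom (algebraMap A B) :=
    ((local_hom_TFAE _).out 0 2).mpr (hram ▸ Ideal.pow_le_self two_ne_zero)
  have hU : {u : Bˣ | (u : B) - 1 ∈ maximalIdeal B ^ (2 * n - 1)} =
      unitsFiltration B (2 * n - 1) :=
    Set.ext fun _ => mem_unitsFiltration.symm
  have hclosure : Subgroup.closure (Set.range (Units.map (algebraMap A B : A →+* B).toMonoidHom) ∪
      {u : Bˣ | (u : B) - 1 ∈ maximalIdeal B ^ (2 * n - 1)}) =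
      (Units.map (algebraMap A B).toMonoidHom).range ⊔ unitsFiltration B (2 * n - 1) := by
    rw [Subgroup.closure_union, ← MonoidHom.coe_range, hU, Subgroup.closure_eq,
      Subgroup.closure_eq]
  rw [hclosure, ← hq, nat_card_residueField_eq hressurj]
  cases n with
  | zero => simp [unitsFiltration_zero]
  | succ n =>
    rw [show 2 * (n + 1) - 1 = 2 * n + 1 by omega, Nat.add_sub_cancel,
      index_range_sup_unitsFiltration_two_mul_add_one hram hressurj n]

theorem stmt11 {A B : Type*} [CommRing A] [CommRing B] [IsDomain A] [IsDomain B]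
    [IsDiscreteValuationRing A] [IsDiscreteValuationRing B] [Algebra A B]
    [Module.Free A B] [Module.Finite A B]
    (hquad : Module.finrank A B = 2)
    (hram : Ideal.map (algebraMap A B) (IsLocalRing.maximalIdeal A) =
      IsLocalRing.maximalIdeal B ^ 2)
    (hressurj : Function.Surjective fun a : A =>
      Ideal.Quotient.mk (IsLocalRing.maximalIdeal B) (algebraMap A B a))
    (q : ℕ) (hq : Nat.card (IsLocalRing.ResidueField A) = q)
    (n : ℕ) (hn : 1 ≤ n) :
    (Subgroup.closure
        (Set.range (Units.map (algebraMap A B : A →+* B).toMonoidHom) ∪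
          {u : Bˣ | (u : B) - 1 ∈ IsLocalRing.maximalIdeal B ^ (2 * n - 1)})).index =
      q ^ (n - 1) :=
  stmt11_general hram hressurj q hq n
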